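/- arXiv:1702.03835 — 3 statements merged into one kernel-verified Lean document; each statement's English description precedes it below -/
import Mathlib

section
/- Let K > 0 and z₀ ∈ ℂ with |z₀| ≤ 1 and z₀ ≠ -1. Define z(t) = ((1+z₀)e^{Kt} - (1-z₀)) / ((1+z₀)e^{Kt} + (1-z₀)). Then there exists a constant C > 0 such that |1 - z(t)| ≤ C e^{-Kt} for all t ≥ 0. -/
/-!
Writing `r = exp (K t)`, one has `1 - z t = 2 (1 - z₀) / D` with `D = (1 + z₀) r + (1 - z₀)`.
The real inner product of `1 + z₀` and `1 - z₀` is `1 - ‖z₀‖² ≥ 0`, so adding `1 - z₀` to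
`(1 + z₀) r` cannot decrease its norm: `‖D‖ ≥ ‖1 + z₀‖ r`. Since `‖1 - z₀‖ ≤ 2`, this gives
`‖1 - z t‖ ≤ 4 / ‖1 + z₀‖ · exp (-K t)`.
-/

open scoped InnerProductSpace

theorem norm_le_norm_add_of_real_inner_nonneg {F : Type*} [NormedAddCommGroup F]
    [InnerProductSpace ℝ F] {x y : F} (h : 0 ≤ ⟪x, y⟫_ℝ) : ‖x‖ ≤ ‖x + y‖ := by
  refine (pow_le_pow_iff_left₀ (norm_nonneg _) (norm_nonneg _) two_ne_zero).mp ?_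
  nlinarith [norm_add_sq_real x y, sq_nonneg ‖y‖]

theorem Complex.inner_one_add_one_sub (z : ℂ) : ⟪1 + z, 1 - z⟫_ℝ = 1 - ‖z‖ ^ 2 := by
  simp only [Complex.inner, Complex.sq_norm, Complex.normSq_apply, Complex.mul_re,
    Complex.sub_re, Complex.add_re, Complex.sub_im, Complex.add_im, Complex.conj_re,
    Complex.conj_im, Complex.one_re, Complex.one_im]
  ring

theorem Complex.norm_one_add_mul_le {z : ℂ} (hz : ‖z‖ ≤ 1) {r : ℝ} (hr : 0 ≤ r) :
    ‖1 + z‖ * r ≤ ‖(1 + z) * r + (1 - z)‖ := by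
  have hinner : 0 ≤ ⟪(r : ℂ) * (1 + z), 1 - z⟫_ℝ := by
    rw [← Complex.real_smul, real_inner_smul_left, Complex.inner_one_add_one_sub]
    have : ‖z‖ ^ 2 ≤ 1 := pow_le_one₀ (norm_nonneg z) hz
    nlinarith
  simpa [abs_of_nonneg hr, mul_comm] using
    norm_le_norm_add_of_real_inner_nonneg hinner

theorem one_sub_div_add {K : Type*} [Field K] {a b : K} (h : a + b ≠ 0) :
    1 - (a - b) / (a + b) = 2 * b / (a + b) := by
  field_simp
  ring

theorem exp_sync_estimate_general (K : ℝ) (z₀ : ℂ)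
    (hz₀ : ‖z₀‖ ≤ 1) (hz₀' : z₀ ≠ -1)
    (z : ℝ → ℂ)
    (hz : ∀ t : ℝ, z t =
      ((1 + z₀) * Complex.exp (K * t) - (1 - z₀)) /
      ((1 + z₀) * Complex.exp (K * t) + (1 - z₀))) :
    ∃ C : ℝ, 0 < C ∧ ∀ t : ℝ, 0 ≤ t →
      ‖1 - z t‖ ≤ C * Real.exp (-K * t) := by
  have ha : 0 < ‖1 + z₀‖ := norm_pos_iff.mpr fun h ↦ hz₀' (eq_neg_of_add_eq_zero_right h)
  refine ⟨4 / ‖1 + z₀‖, by positivity, fun t _ ↦ ?_⟩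
  set r := Real.exp (K * t)
  have hr : 0 < r := Real.exp_pos _
  have hexp : Complex.exp (K * t) = r := by simp [r]
  have hD : ‖1 + z₀‖ * r ≤ ‖(1 + z₀) * r + (1 - z₀)‖ := Complex.norm_one_add_mul_le hz₀ hr.le
  have hDpos : 0 < ‖(1 + z₀) * r + (1 - z₀)‖ := lt_of_lt_of_le (by positivity) hD
  have hnum : ‖2 * (1 - z₀)‖ ≤ 4 := by
    rw [norm_mul, Complex.norm_two]
    linarith [norm_sub_le (1 : ℂ) z₀, norm_one (α := ℂ)]
  rw [hz, hexp, one_sub_div_add (norm_pos_iff.mp hDpos), norm_div, neg_mul, Real.exp_neg]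
  calc ‖2 * (1 - z₀)‖ / ‖(1 + z₀) * r + (1 - z₀)‖
      ≤ 4 / (‖1 + z₀‖ * r) := div_le_div₀ (by norm_num) hnum (by positivity) hD
    _ = 4 / ‖1 + z₀‖ * r⁻¹ := by rw [div_mul_eq_div_div, div_eq_mul_inv]

theorem exp_sync_estimate (K : ℝ) (hK : 0 < K) (z₀ : ℂ)
    (hz₀ : ‖z₀‖ ≤ 1) (hz₀' : z₀ ≠ -1)
    (z : ℝ → ℂ)
    (hz : ∀ t : ℝ, z t =
      ((1 + z₀) * Complex.exp (K * t) - (1 - z₀)) /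
      ((1 + z₀) * Complex.exp (K * t) + (1 - z₀))) :
    ∃ C : ℝ, 0 < C ∧ ∀ t : ℝ, 0 ≤ t →
      ‖1 - z t‖ ≤ C * Real.exp (-K * t) :=
  exp_sync_estimate_general K z₀ hz₀ hz₀' z hz
end

section
/- Let K > 0, z₀ ∈ ℂ with |z₀| ≤ 1 and z₀ ≠ -1, and set z(t) = ((1+z₀)e^{Kt} - (1-z₀)) / ((1+z₀)e^{Kt} + (1-z₀)). Then the denominator (1+z₀)e^{Kt} + (1-z₀) is nonzero for every t ≥ 0, so z is well defined on [0,∞). -/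
/-! Writing `x = e^{Kt} > 0`, the denominator is `(x + 1) + z₀ (x - 1)`, and
`‖z₀ (x - 1)‖ ≤ |x - 1| < x + 1`, so it cannot vanish. -/

lemma RCLike.ofReal_add_mul_ofReal_ne_zero {𝕜 : Type*} [RCLike 𝕜] {z : 𝕜}
    (hz : ‖z‖ ≤ 1) {a b : ℝ} (hab : |b| < a) : (a : 𝕜) + z * b ≠ 0 := by
  intro h
  have hnorm : ‖(a : 𝕜)‖ = ‖z * b‖ := by rw [eq_neg_of_add_eq_zero_left h, norm_neg]
  have : |a| ≤ |b| := calc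
    |a| = ‖z‖ * |b| := by rwa [norm_mul, RCLike.norm_ofReal, RCLike.norm_ofReal] at hnorm
    _ ≤ |b| := mul_le_of_le_one_left (abs_nonneg b) hz
  exact absurd (hab.trans_le (le_abs_self a)) this.not_gt

lemma RCLike.one_add_mul_ofReal_add_one_sub_ne_zero {𝕜 : Type*} [RCLike 𝕜] {z : 𝕜}
    (hz : ‖z‖ ≤ 1) {x : ℝ} (hx : 0 < x) : (1 + z) * x + (1 - z) ≠ 0 := by
  have hsplit : (1 + z) * x + (1 - z) = ((x + 1 : ℝ) : 𝕜) + z * ((x - 1 : ℝ) : 𝕜) := by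
    push_cast
    ring
  rw [hsplit]
  exact RCLike.ofReal_add_mul_ofReal_ne_zero hz (abs_sub_lt_iff.mpr ⟨by linarith, by linarith⟩)

theorem denominator_nonzero_general (K : ℝ) (z₀ : ℂ)
    (hz₀ : ‖z₀‖ ≤ 1) :
    ∀ t : ℝ, 0 ≤ t → (1 + z₀) * Complex.exp (K * t) + (1 - z₀) ≠ 0 := by
  intro t _
  rw [← Complex.ofReal_mul, ← Complex.ofReal_exp]
  exact RCLike.one_add_mul_ofReal_add_one_sub_ne_zero hz₀ (Real.exp_pos _)

theorem denominator_nonzero (K : ℝ) (hK : 0 < K) (z₀ : ℂ)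
    (hz₀ : ‖z₀‖ ≤ 1) (hz₀' : z₀ ≠ -1) :
    ∀ t : ℝ, 0 ≤ t → (1 + z₀) * Complex.exp (K * t) + (1 - z₀) ≠ 0 :=
  denominator_nonzero_general K z₀ hz₀
end

section
/- Let K > 0, z₀ ∈ ℂ with |z₀| ≤ 1 and z₀ ≠ -1, and let z(t) = ((1+z₀)e^{Kt} - (1-z₀)) / ((1+z₀)e^{Kt} + (1-z₀)). Then Re z(t) → 1 as t → ∞; in particular there exists T ≥ 0 such that Re z(t) ≥ 1/2 for all t ≥ T. -/
/-! `z` is the Möbius map `w ↦ ((1 + z₀) w - (1 - z₀)) / ((1 + z₀) w + (1 - z₀))` evaluated at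
`w = exp (K t)`, which escapes to infinity; since `1 + z₀ ≠ 0` the map tends to `1` there. -/

open Filter Topology Bornology

theorem tendsto_linear_div_linear_cobounded {𝕜 : Type*} [NormedField 𝕜] (a b c d : 𝕜)
    (hc : c ≠ 0) :
    Tendsto (fun w => (a * w + b) / (c * w + d)) (cobounded 𝕜) (𝓝 (a / c)) := by
  have hinv : Tendsto (·⁻¹) (cobounded 𝕜) (𝓝 (0 : 𝕜)) := tendsto_inv₀_cobounded
  have hlim : Tendsto (fun w => (a + b * w⁻¹) / (c + d * w⁻¹)) (cobounded 𝕜) (𝓝 (a / c)) := by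
    have h := ((hinv.const_mul b).const_add a).div ((hinv.const_mul d).const_add c) (by simpa)
    simp only [mul_zero, add_zero] at h
    exact h
  refine hlim.congr' ?_
  filter_upwards [eventually_cobounded_le_norm 1] with w hw
  have hw0 : w ≠ 0 := norm_pos_iff.1 (one_pos.trans_le hw)
  rw [← mul_div_mul_right _ _ hw0]
  field_simp

theorem Complex.tendsto_exp_mul_atTop_cobounded {K : ℝ} (hK : 0 < K) :
    Tendsto (fun t : ℝ => Complex.exp (K * t)) atTop (cobounded ℂ) := by
  refine Complex.tendsto_exp_comap_re_atTop.comp (tendsto_comap_iff.2 ?_)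
  simpa [Function.comp_def] using tendsto_id.const_mul_atTop hK

theorem re_z_tendsto_one_general (K : ℝ) (hK : 0 < K) (z₀ : ℂ)
    (hz₀' : z₀ ≠ -1)
    (z : ℝ → ℂ)
    (hz : ∀ t : ℝ, z t =
      ((1 + z₀) * Complex.exp (K * t) - (1 - z₀)) /
      ((1 + z₀) * Complex.exp (K * t) + (1 - z₀))) :
    Filter.Tendsto (fun t => (z t).re) Filter.atTop (nhds 1) ∧
    ∃ T : ℝ, 0 ≤ T ∧ ∀ t : ℝ, T ≤ t → (1 / 2 : ℝ) ≤ (z t).re := by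
  have ha : 1 + z₀ ≠ 0 := fun h => hz₀' (by linear_combination h)
  have hz_lim : Tendsto z atTop (𝓝 1) := by
    have h := (tendsto_linear_div_linear_cobounded (1 + z₀) (-(1 - z₀)) _ (1 - z₀) ha).comp
      (Complex.tendsto_exp_mul_atTop_cobounded hK)
    rw [div_self ha] at h
    refine h.congr fun t => ?_
    simp only [Function.comp_apply, hz, sub_eq_add_neg]
  have hre : Tendsto (fun t => (z t).re) atTop (𝓝 1) :=
    (Complex.continuous_re.tendsto 1).comp hz_lim
  obtain ⟨T, hT⟩ := eventually_atTop.1 (hre.eventually_const_le (by norm_num : (1 / 2 : ℝ) < 1))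
  exact ⟨hre, max T 0, le_max_right _ _, fun t ht => hT t ((le_max_left _ _).trans ht)⟩

theorem re_z_tendsto_one (K : ℝ) (hK : 0 < K) (z₀ : ℂ)
    (hz₀ : ‖z₀‖ ≤ 1) (hz₀' : z₀ ≠ -1)
    (z : ℝ → ℂ)
    (hz : ∀ t : ℝ, z t =
      ((1 + z₀) * Complex.exp (K * t) - (1 - z₀)) /
      ((1 + z₀) * Complex.exp (K * t) + (1 - z₀))) :
    Filter.Tendsto (fun t => (z t).re) Filter.atTop (nhds 1) ∧
    ∃ T : ℝ, 0 ≤ T ∧ ∀ t : ℝ, T ≤ t → (1 / 2 : ℝ) ≤ (z t).re :=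
  re_z_tendsto_one_general K hK z₀ hz₀' z hz
end
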